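/- arXiv:2504.06186 — 3 statements merged into one kernel-verified Lean document; each statement's English description precedes it below -/
import Mathlib

section
/- For each fixed t ∈ [0,1] and θ > 0, the map k ↦ σ_k^{(t)}(θ) is log-convex on the domain {k : kθ² < π²}. -/
open Real Filter Finset Topology

/-- The generalized sine function `sin_k`. -/
noncomputable def genSin (k t : ℝ) : ℝ :=
  if 0 < k then Real.sin (Real.sqrt k * t) / Real.sqrt k
  else if k < 0 then Real.sinh (Real.sqrt (-k) * t) / Real.sqrt (-k)
  else t

/-- The reduced distortion coefficient `σ_k^{(t)}(θ)` (finite branch). -/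
noncomputable def sigmaR (k t θ : ℝ) : ℝ := genSin k (t * θ) / genSin k θ

lemma genSin_pos {k s : ℝ} (hs : 0 < s) (h : k * s ^ 2 < Real.pi ^ 2) :
    0 < genSin k s := by
  unfold genSin
  split_ifs with hk hk'
  · have hx : 0 < Real.sqrt k * s := mul_pos (Real.sqrt_pos.mpr hk) hs
    have hlt : Real.sqrt k * s < Real.pi := by
      have : Real.sqrt (k * s ^ 2) < Real.sqrt (Real.pi ^ 2) :=
        Real.sqrt_lt_sqrt (by positivity) h
      rwa [Real.sqrt_mul hk.le, Real.sqrt_sq hs.le, Real.sqrt_sq Real.pi_pos.le] at this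
    exact div_pos (Real.sin_pos_of_pos_of_lt_pi hx hlt) (Real.sqrt_pos.mpr hk)
  · exact div_pos (Real.sinh_pos_iff.mpr (mul_pos (Real.sqrt_pos.mpr (by linarith)) hs))
      (Real.sqrt_pos.mpr (by linarith))
  · exact hs

/-- Euler product formula for `genSin`. -/
lemma genSin_prod {k s : ℝ} (hs : 0 < s) (h : k * s ^ 2 < Real.pi ^ 2) :
    Tendsto (fun N : ℕ => ∏ j ∈ Finset.range N,
        ((1 : ℝ) - s ^ 2 / (((j : ℝ) + 1) ^ 2 * Real.pi ^ 2) * k))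
      atTop (𝓝 (genSin k s / s)) := by
  have hπ := Real.pi_pos
  have hπc : (Real.pi : ℂ) ≠ 0 := by exact_mod_cast hπ.ne'
  rcases lt_trichotomy k 0 with hk | hk | hk
  · have hk0 : (0:ℝ) ≤ -k := by linarith
    set y : ℝ := Real.sqrt (-k) * s with hy
    have hy0 : 0 < y := mul_pos (Real.sqrt_pos.mpr (by linarith)) hs
    have hy2 : (y:ℂ) ^ 2 = ((-k * s ^ 2 : ℝ) : ℂ) := by
      rw [hy]
      push_cast
      rw [mul_pow]
      norm_cast
      rw [Real.sq_sqrt hk0]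
    set z : ℂ := (y : ℂ) * Complex.I / (Real.pi : ℂ) with hz
    have hz2 : z ^ 2 = ((k * s ^ 2 / Real.pi ^ 2 : ℝ) : ℂ) := by
      rw [hz, div_pow, mul_pow, Complex.I_sq, hy2]
      push_cast
      ring
    have hC := Complex.tendsto_euler_sin_prod z
    have hπz : (Real.pi : ℂ) * z = (y : ℂ) * Complex.I := by
      rw [hz]
      field_simp
    have hterm : ∀ j : ℕ, (1 : ℂ) - z ^ 2 / ((j : ℂ) + 1) ^ 2 =
        (((1 : ℝ) - s ^ 2 / (((j : ℝ) + 1) ^ 2 * Real.pi ^ 2) * k : ℝ) : ℂ) := by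
      intro j
      have hj : ((j : ℝ) + 1) ≠ 0 := by positivity
      rw [hz2]
      push_cast
      field_simp
    rw [hπz] at hC
    simp only [hterm] at hC
    have hsin : Complex.sin ((y : ℂ) * Complex.I) = (Real.sinh y : ℂ) * Complex.I := by
      rw [Complex.sin_mul_I]; norm_cast
    rw [hsin] at hC
    have hne : ((y : ℂ) * Complex.I) ≠ 0 :=
      mul_ne_zero (by exact_mod_cast hy0.ne') Complex.I_ne_zero
    have hC2 := hC.div_const ((y : ℂ) * Complex.I)
    simp only [mul_div_cancel_left₀ _ hne] at hC2
    have hval : (Real.sinh y : ℂ) * Complex.I / ((y : ℂ) * Complex.I)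
        = ((Real.sinh y / y : ℝ) : ℂ) := by
      rw [mul_div_mul_right _ _ Complex.I_ne_zero]
      push_cast
      ring
    rw [hval] at hC2
    have := (Complex.continuous_re.tendsto _).comp hC2
    simp only [Function.comp_def, Complex.ofReal_re] at this
    convert this using 2 with N
    · push_cast; norm_cast
    · unfold genSin
      rw [if_neg (by linarith), if_pos hk, div_div]
  · subst hk
    simp only [mul_zero, sub_zero, Finset.prod_const_one]
    unfold genSin
    simp [div_self hs.ne']
  · set x : ℝ := Real.sqrt k * s / Real.pi with hx
    have hx0 : 0 < x := div_pos (mul_pos (Real.sqrt_pos.mpr hk) hs) hπ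
    have hR := Real.tendsto_euler_sin_prod x
    have hπx : Real.pi * x = Real.sqrt k * s := by
      rw [hx]
      field_simp
    have hterm : ∀ j : ℕ, (1 : ℝ) - x ^ 2 / ((j : ℝ) + 1) ^ 2 =
        (1 : ℝ) - s ^ 2 / (((j : ℝ) + 1) ^ 2 * Real.pi ^ 2) * k := by
      intro j
      have hj : ((j : ℝ) + 1) ≠ 0 := by positivity
      rw [hx, div_pow, mul_pow, Real.sq_sqrt hk.le]
      field_simp
    rw [hπx] at hR
    simp only [hterm] at hR
    have hne : Real.sqrt k * s ≠ 0 := (mul_pos (Real.sqrt_pos.mpr hk) hs).ne'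
    have hR2 := hR.div_const (Real.sqrt k * s)
    simp only [mul_div_cancel_left₀ _ hne] at hR2
    convert hR2 using 2
    unfold genSin
    rw [if_pos hk, div_div]

lemma term_pos {k s : ℝ} (h : k * s ^ 2 < Real.pi ^ 2) (j : ℕ) :
    0 < (1 : ℝ) - s ^ 2 / (((j : ℝ) + 1) ^ 2 * Real.pi ^ 2) * k := by
  have hπ := Real.pi_pos
  have hj : (0 : ℝ) ≤ (j : ℝ) := Nat.cast_nonneg j
  have hc : 0 < ((j : ℝ) + 1) ^ 2 * Real.pi ^ 2 := by positivity
  have h1 : k * s ^ 2 < ((j : ℝ) + 1) ^ 2 * Real.pi ^ 2 := by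
    nlinarith [mul_nonneg hj (sq_nonneg Real.pi), mul_nonneg (mul_nonneg hj hj) (sq_nonneg Real.pi)]
  have h2 : s ^ 2 / (((j : ℝ) + 1) ^ 2 * Real.pi ^ 2) * k
      = k * s ^ 2 / (((j : ℝ) + 1) ^ 2 * Real.pi ^ 2) := by ring
  rw [h2, sub_pos]
  exact (div_lt_one hc).mpr h1

lemma genSin_log_sum {k s : ℝ} (hs : 0 < s) (h : k * s ^ 2 < Real.pi ^ 2) :
    Tendsto (fun N : ℕ => ∑ j ∈ Finset.range N,
        Real.log ((1 : ℝ) - s ^ 2 / (((j : ℝ) + 1) ^ 2 * Real.pi ^ 2) * k))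
      atTop (𝓝 (Real.log (genSin k s) - Real.log s)) := by
  have hg := genSin_pos hs h
  have hne : genSin k s / s ≠ 0 := (div_pos hg hs).ne'
  have hlog := (Real.continuousAt_log hne).tendsto.comp (genSin_prod hs h)
  simp only [Function.comp_def] at hlog
  rw [Real.log_div hg.ne' hs.ne'] at hlog
  exact hlog.congr fun N => Real.log_prod fun j _ => (term_pos h j).ne'

lemma convex_term {a b c : ℝ} (ha : 0 ≤ a) (hab : a ≤ b)
    (hb : ∀ k ∈ Set.Iio c, b * k < 1) :
    ConvexOn ℝ (Set.Iio c) (fun k => Real.log (1 - a * k) - Real.log (1 - b * k)) := by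
  have hb0 : 0 ≤ b := ha.trans hab
  have hB : ∀ k ∈ Set.Iio c, 0 < 1 - b * k := fun k hk => sub_pos.mpr (hb k hk)
  have hA : ∀ k ∈ Set.Iio c, 0 < 1 - a * k := by
    intro k hk
    rcases le_or_gt 0 k with h0 | h0
    · have h1 : a * k ≤ b * k := mul_le_mul_of_nonneg_right hab h0
      have := hb k hk
      linarith
    · have : a * k ≤ 0 := mul_nonpos_of_nonneg_of_nonpos ha h0.le
      linarith
  have hd : ∀ k ∈ Set.Iio c, HasDerivAt
      (fun k => Real.log (1 - a * k) - Real.log (1 - b * k))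
      ((b - a) / ((1 - a * k) * (1 - b * k))) k := by
    intro k hk
    have d1 : HasDerivAt (fun k : ℝ => 1 - a * k) (-a) k := by
      simpa using ((hasDerivAt_id k).const_mul a).const_sub 1
    have d2 : HasDerivAt (fun k : ℝ => 1 - b * k) (-b) k := by
      simpa using ((hasDerivAt_id k).const_mul b).const_sub 1
    have l1 := d1.log (hA k hk).ne'
    have l2 := d2.log (hB k hk).ne'
    have := l1.sub l2
    refine this.congr_deriv ?_
    rw [div_sub_div _ _ (hA k hk).ne' (hB k hk).ne']
    congr 1
    ring
  have hint : interior (Set.Iio c) = Set.Iio c := interior_Iio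
  refine MonotoneOn.convexOn_of_deriv (convex_Iio c) ?_ ?_ ?_
  · intro k hk
    exact ((hd k hk).continuousAt).continuousWithinAt
  · rw [hint]
    intro k hk
    exact ((hd k hk).differentiableAt).differentiableWithinAt
  · rw [hint]
    intro x hx y hy hxy
    rw [(hd x hx).deriv, (hd y hy).deriv]
    have pax := hA x hx; have pbx := hB x hx
    have pay := hA y hy; have pby := hB y hy
    have h2 : (1 - a * y) * (1 - b * y) ≤ (1 - a * x) * (1 - b * x) := by
      apply mul_le_mul (by nlinarith) (by nlinarith) pby.le (by linarith)
    have h3 : 0 < (1 - a * y) * (1 - b * y) := mul_pos pay pby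
    have h4 : 0 ≤ b - a := by linarith
    gcongr

/-- For fixed `t ∈ [0,1]` and `θ > 0`, the map `k ↦ σ_k^{(t)}(θ)` is log-convex
on the domain `{k : kθ² < π²}`. -/
theorem sigma_logConvex (t θ : ℝ) (ht : t ∈ Set.Icc (0 : ℝ) 1) (hθ : 0 < θ) :
    ConvexOn ℝ {k : ℝ | k * θ ^ 2 < Real.pi ^ 2}
      (fun k => Real.log (sigmaR k t θ)) := by
  obtain ⟨ht0, ht1⟩ := ht
  have hπ := Real.pi_pos
  have hθ2 : (0:ℝ) < θ ^ 2 := by positivity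
  have hSθ : {k : ℝ | k * θ ^ 2 < Real.pi ^ 2} = Set.Iio (Real.pi ^ 2 / θ ^ 2) := by
    ext k
    simp only [Set.mem_setOf_eq, Set.mem_Iio]
    rw [lt_div_iff₀ hθ2]
  rw [hSθ]
  set c : ℝ := Real.pi ^ 2 / θ ^ 2 with hc
  have ht2 : t ^ 2 ≤ 1 := by nlinarith
  rcases eq_or_lt_of_le ht0 with h0 | h0
  · -- t = 0
    have hz : ∀ k : ℝ, sigmaR k 0 θ = 0 := by
      intro k
      unfold sigmaR genSin
      split_ifs <;> simp
    rw [← h0]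
    simp only [hz, Real.log_zero]
    exact convexOn_const 0 (convex_Iio c)
  · -- 0 < t
    set a : ℕ → ℝ := fun n => (t * θ) ^ 2 / (((n : ℝ) + 1) ^ 2 * Real.pi ^ 2) with ha
    set b : ℕ → ℝ := fun n => θ ^ 2 / (((n : ℝ) + 1) ^ 2 * Real.pi ^ 2) with hb
    set F : ℕ → ℝ → ℝ := fun N k => Real.log t +
      ∑ n ∈ Finset.range N, (Real.log (1 - a n * k) - Real.log (1 - b n * k)) with hF
    have htθ : 0 < t * θ := mul_pos h0 hθ
    -- each F N is convex
    have hconvN : ∀ N, ConvexOn ℝ (Set.Iio c) (F N) := by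
      intro N
      apply (convexOn_const _ (convex_Iio c)).add
      induction N with
      | zero => simpa using convexOn_const 0 (convex_Iio c)
      | succ N ih =>
        simp only [Finset.sum_range_succ]
        apply ih.add
        apply convex_term (by positivity)
        · apply div_le_div_of_nonneg_right ?_ (by positivity)
          nlinarith [mul_le_mul_of_nonneg_right ht2 hθ2.le]
        · intro k hk
          have hck : k * θ ^ 2 < Real.pi ^ 2 := by
            rw [Set.mem_Iio, hc, lt_div_iff₀ hθ2] at hk
            exact hk
          have hj : (0 : ℝ) ≤ (N : ℝ) := Nat.cast_nonneg N
          rw [hb]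
          have : θ ^ 2 / (((N : ℝ) + 1) ^ 2 * Real.pi ^ 2) * k
              = k * θ ^ 2 / (((N : ℝ) + 1) ^ 2 * Real.pi ^ 2) := by ring
          rw [this, div_lt_one (by positivity)]
          have hj2 : (0:ℝ) ≤ (N:ℝ) := hj
          nlinarith [mul_nonneg hj (sq_nonneg Real.pi), mul_nonneg (mul_nonneg hj hj) (sq_nonneg Real.pi)]
    -- pointwise limit
    have hlim : ∀ k ∈ Set.Iio c, Tendsto (fun N => F N k) atTop
        (𝓝 (Real.log (sigmaR k t θ))) := by
      intro k hk
      have hck : k * θ ^ 2 < Real.pi ^ 2 := by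
        rw [Set.mem_Iio, hc, lt_div_iff₀ hθ2] at hk
        exact hk
      have hck2 : k * (t * θ) ^ 2 < Real.pi ^ 2 := by
        rcases le_or_gt 0 k with h | h
        · nlinarith [mul_nonneg (mul_nonneg h hθ2.le) (sub_nonneg.mpr ht2)]
        · nlinarith [sq_nonneg (t * θ)]
      have S1 := genSin_log_sum htθ hck2
      have S2 := genSin_log_sum hθ hck
      have hsum : ∀ j : ℕ,
          Real.log (1 - a j * k) - Real.log (1 - b j * k) =
            Real.log ((1 : ℝ) - (t * θ) ^ 2 / (((j : ℝ) + 1) ^ 2 * Real.pi ^ 2) * k)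
            - Real.log ((1 : ℝ) - θ ^ 2 / (((j : ℝ) + 1) ^ 2 * Real.pi ^ 2) * k) := by
        intro j; rfl
      have hT : Tendsto (fun N => F N k) atTop (𝓝 (Real.log t +
          ((Real.log (genSin k (t * θ)) - Real.log (t * θ))
            - (Real.log (genSin k θ) - Real.log θ)))) := by
        apply Tendsto.const_add
        simp only [hsum, Finset.sum_sub_distrib]
        exact S1.sub S2
      have hval : Real.log t +
          ((Real.log (genSin k (t * θ)) - Real.log (t * θ))
            - (Real.log (genSin k θ) - Real.log θ))
          = Real.log (sigmaR k t θ) := by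
        unfold sigmaR
        rw [Real.log_div (genSin_pos htθ hck2).ne' (genSin_pos hθ hck).ne',
          Real.log_mul h0.ne' hθ.ne']
        ring
      rwa [hval] at hT
    -- conclude
    refine ⟨convex_Iio c, ?_⟩
    intro x hx y hy p q hp hq hpq
    have hxy : p • x + q • y ∈ Set.Iio c := (convex_Iio c) hx hy hp hq hpq
    have t1 := hlim _ hxy
    have t2 : Tendsto (fun N => p * F N x + q * F N y) atTop
        (𝓝 (p * Real.log (sigmaR x t θ) + q * Real.log (sigmaR y t θ))) :=
      ((hlim x hx).const_mul p).add ((hlim y hy).const_mul q)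
    have key : ∀ N, F N (p • x + q • y) ≤ p * F N x + q * F N y := by
      intro N
      simpa [smul_eq_mul] using (hconvN N).2 hx hy hp hq hpq
    simpa [smul_eq_mul] using le_of_tendsto_of_tendsto' t1 t2 key
end

section
/- Let D : [0,1] → (0,∞) be C² and satisfy D''(t) + (K−ε)λ²/N · D(t) ≥ 0 on [0,1], where K ∈ ℝ, ε > 0, N > 1, λ > 0 with (K−ε)λ²/N < π². Then D(t) ≤ σ_{(K−ε)/N}^{(1−t)}(λ) D(0) + σ_{(K−ε)/N}^{(t)}(λ) D(1) for all t ∈ [0,1]. -/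
noncomputable def genCos (k t : ℝ) : ℝ :=
  if 0 < k then Real.cos (Real.sqrt k * t)
  else if k < 0 then Real.cosh (Real.sqrt (-k) * t)
  else 1

lemma genSin_zero (k : ℝ) : genSin k 0 = 0 := by
  unfold genSin; split_ifs <;> simp

lemma hasDerivAt_genSin (k t : ℝ) : HasDerivAt (genSin k) (genCos k t) t := by
  rcases lt_trichotomy 0 k with hk | hk | hk
  · have hs : Real.sqrt k ≠ 0 := ne_of_gt (Real.sqrt_pos.mpr hk)
    have hfun : genSin k = fun t => Real.sin (Real.sqrt k * t) / Real.sqrt k :=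
      funext fun t => by simp [genSin, hk]
    have h1 : HasDerivAt (fun t : ℝ => Real.sqrt k * t) (Real.sqrt k) t := by
      simpa using (hasDerivAt_id t).const_mul (Real.sqrt k)
    have h2 := (h1.sin).div_const (Real.sqrt k)
    rw [hfun]
    refine h2.congr_deriv ?_
    simp [genCos, hk]
    field_simp
  · have hfun : genSin k = fun t => t := funext fun t => by simp [genSin, ← hk]
    rw [hfun]
    simpa [genCos, ← hk] using hasDerivAt_id' t
  · have hkpos : 0 < -k := by linarith
    have hs : Real.sqrt (-k) ≠ 0 := ne_of_gt (Real.sqrt_pos.mpr hkpos)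
    have hfun : genSin k = fun t => Real.sinh (Real.sqrt (-k) * t) / Real.sqrt (-k) :=
      funext fun t => by simp [genSin, hk, not_lt.mpr hk.le, asymm hk]
    have h1 : HasDerivAt (fun t : ℝ => Real.sqrt (-k) * t) (Real.sqrt (-k)) t := by
      simpa using (hasDerivAt_id t).const_mul (Real.sqrt (-k))
    have h2 := (h1.sinh).div_const (Real.sqrt (-k))
    rw [hfun]
    refine h2.congr_deriv ?_
    simp [genCos, hk, asymm hk]
    field_simp

lemma hasDerivAt_genCos (k t : ℝ) : HasDerivAt (genCos k) (-(k * genSin k t)) t := by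
  rcases lt_trichotomy 0 k with hk | hk | hk
  · have hs : Real.sqrt k ≠ 0 := ne_of_gt (Real.sqrt_pos.mpr hk)
    have hfun : genCos k = fun t => Real.cos (Real.sqrt k * t) :=
      funext fun t => by simp [genCos, hk]
    have h1 : HasDerivAt (fun t : ℝ => Real.sqrt k * t) (Real.sqrt k) t := by
      simpa using (hasDerivAt_id t).const_mul (Real.sqrt k)
    have h2 := h1.cos
    rw [hfun]
    convert h2 using 1
    have hkk : Real.sqrt k * Real.sqrt k = k := Real.mul_self_sqrt hk.le
    simp only [genSin, if_pos hk]
    field_simp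
    rw [Real.sq_sqrt hk.le]
  · have hfun : genCos k = fun _ => (1 : ℝ) := funext fun t => by simp [genCos, ← hk]
    rw [hfun]
    simpa [← hk] using hasDerivAt_const t (1 : ℝ)
  · have hkpos : 0 < -k := by linarith
    have hs : Real.sqrt (-k) ≠ 0 := ne_of_gt (Real.sqrt_pos.mpr hkpos)
    have hfun : genCos k = fun t => Real.cosh (Real.sqrt (-k) * t) :=
      funext fun t => by simp [genCos, asymm hk, hk]
    have h1 : HasDerivAt (fun t : ℝ => Real.sqrt (-k) * t) (Real.sqrt (-k)) t := by
      simpa using (hasDerivAt_id t).const_mul (Real.sqrt (-k))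
    have h2 := h1.cosh
    rw [hfun]
    convert h2 using 1
    have hkk : Real.sqrt (-k) * Real.sqrt (-k) = -k := Real.mul_self_sqrt hkpos.le
    simp only [genSin, if_neg (lt_asymm hk), if_pos hk]
    field_simp
    rw [Real.sq_sqrt hkpos.le]
    ring

lemma genSin_pos_s8 {k t : ℝ} (hk : k < Real.pi ^ 2) (ht : 0 < t) (ht1 : t ≤ 1) :
    0 < genSin k t := by
  rcases lt_trichotomy 0 k with hkp | hkp | hkp
  · have hsq : 0 < Real.sqrt k := Real.sqrt_pos.mpr hkp
    have hlt : Real.sqrt k < Real.pi := by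
      have := Real.sqrt_lt_sqrt hkp.le hk
      rwa [Real.sqrt_sq Real.pi_pos.le] at this
    have harg : Real.sqrt k * t < Real.pi := by nlinarith
    have hpos : 0 < Real.sin (Real.sqrt k * t) :=
      Real.sin_pos_of_pos_of_lt_pi (by positivity) harg
    simp only [genSin, if_pos hkp]
    positivity
  · simp [genSin, ← hkp, ht]
  · have hkpos : 0 < -k := by linarith
    have hsq : 0 < Real.sqrt (-k) := Real.sqrt_pos.mpr hkpos
    have hpos : 0 < Real.sinh (Real.sqrt (-k) * t) := by
      rw [Real.sinh_pos_iff]; positivity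
    simp only [genSin, if_neg (lt_asymm hkp), if_pos hkp]
    positivity

lemma genSin_scale (k lam : ℝ) (hl : 0 < lam) (t : ℝ) :
    genSin k (t * lam) = lam * genSin (k * lam ^ 2) t := by
  have hl2 : (0:ℝ) < lam ^ 2 := by positivity
  rcases lt_trichotomy 0 k with hk | hk | hk
  · have hk2 : 0 < k * lam ^ 2 := by positivity
    have hsq : Real.sqrt (k * lam ^ 2) = Real.sqrt k * lam := by
      rw [Real.sqrt_mul hk.le, Real.sqrt_sq hl.le]
    have hs : Real.sqrt k ≠ 0 := ne_of_gt (Real.sqrt_pos.mpr hk)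
    simp only [genSin, if_pos hk, if_pos hk2, hsq]
    rw [show Real.sqrt k * lam * t = Real.sqrt k * (t * lam) by ring]
    field_simp
  · simp [genSin, ← hk, hl.ne', mul_comm]
  · have hk2 : k * lam ^ 2 < 0 := by nlinarith
    have hsq : Real.sqrt (-(k * lam ^ 2)) = Real.sqrt (-k) * lam := by
      rw [show -(k * lam ^ 2) = (-k) * lam ^ 2 by ring, Real.sqrt_mul (by linarith), Real.sqrt_sq hl.le]
    have hs : Real.sqrt (-k) ≠ 0 := ne_of_gt (Real.sqrt_pos.mpr (by linarith))
    simp only [genSin, if_neg (lt_asymm hk), if_pos hk, if_neg (lt_asymm hk2), if_pos hk2, hsq]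
    rw [show Real.sqrt (-k) * lam * t = Real.sqrt (-k) * (t * lam) by ring]
    field_simp


/-- Integrated form of the differential inequality `D'' + ((K−ε)λ²/N) D ≥ 0` on `[0,1]`. -/
theorem distortion_integral_bound (D : ℝ → ℝ) (K ε N lam : ℝ)
    (hε : 0 < ε) (hN : 1 < N) (hlam : 0 < lam)
    (hsub : (K - ε) * lam ^ 2 / N < Real.pi ^ 2)
    (hD : ContDiff ℝ 2 D) (hpos : ∀ t ∈ Set.Icc (0 : ℝ) 1, 0 < D t)
    (hineq : ∀ t ∈ Set.Icc (0 : ℝ) 1,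
      deriv (deriv D) t + (K - ε) * lam ^ 2 / N * D t ≥ 0) :
    ∀ t ∈ Set.Icc (0 : ℝ) 1,
      D t ≤ sigmaR ((K - ε) / N) (1 - t) lam * D 0
          + sigmaR ((K - ε) / N) t lam * D 1 := by
  intro t ht
  set k : ℝ := (K - ε) * lam ^ 2 / N with hkdef
  have hkπ : k < Real.pi ^ 2 := hsub
  have hs1 : 0 < genSin k 1 := genSin_pos_s8 hkπ one_pos le_rfl
  have hsig : ∀ u : ℝ, sigmaR ((K - ε) / N) u lam = genSin k u / genSin k 1 := by
    intro u
    have hkk : (K - ε) / N * lam ^ 2 = k := by rw [hkdef]; ring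
    have h1 : genSin ((K - ε) / N) (u * lam) = lam * genSin k u := by
      rw [genSin_scale _ lam hlam u, hkk]
    have h2 : genSin ((K - ε) / N) lam = lam * genSin k 1 := by
      have h := genSin_scale ((K - ε) / N) lam hlam 1
      rw [one_mul, hkk] at h
      exact h
    rw [sigmaR, h1, h2, mul_div_mul_left _ _ hlam.ne']
  rw [hsig, hsig]
  have hD1 : Differentiable ℝ D := hD.differentiable (by norm_num)
  have hD2 : Differentiable ℝ (deriv D) :=
    ((contDiff_succ_iff_deriv.mp (show ContDiff ℝ (1 + 1) D from by exact_mod_cast hD)).2.2).differentiable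
      (by norm_num)
  set c1 : ℝ := D 0 / genSin k 1 with hc1
  set c2 : ℝ := D 1 / genSin k 1 with hc2
  set F : ℝ → ℝ := fun u => c1 * genSin k (1 - u) + c2 * genSin k u - D u with hFdef
  set F' : ℝ → ℝ := fun u => -(c1 * genCos k (1 - u)) + c2 * genCos k u - deriv D u with hF'def
  set W : ℝ → ℝ := fun u => genSin k u * F' u - genCos k u * F u with hWdef
  have hFapp : ∀ u, F u = c1 * genSin k (1 - u) + c2 * genSin k u - D u := fun _ => rfl
  have hF'app : ∀ u, F' u = -(c1 * genCos k (1 - u)) + c2 * genCos k u - deriv D u := fun _ => rfl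
  have hWapp : ∀ u, W u = genSin k u * F' u - genCos k u * F u := fun _ => rfl
  have hsub1 : ∀ u : ℝ, HasDerivAt (fun v : ℝ => genSin k (1 - v)) (-(genCos k (1 - u))) u := by
    intro u
    have h := (hasDerivAt_genSin k (1 - u)).comp u
      ((hasDerivAt_const u (1 : ℝ)).sub (hasDerivAt_id u))
    refine h.congr_deriv ?_ <;> simp
  have hcsub : ∀ u : ℝ, HasDerivAt (fun v : ℝ => genCos k (1 - v)) (k * genSin k (1 - u)) u := by
    intro u
    have h := (hasDerivAt_genCos k (1 - u)).comp u
      ((hasDerivAt_const u (1 : ℝ)).sub (hasDerivAt_id u))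
    refine h.congr_deriv ?_
    simp [mul_comm]
  have hFd : ∀ u, HasDerivAt F (F' u) u := by
    intro u
    have h := (((hsub1 u).const_mul c1).add ((hasDerivAt_genSin k u).const_mul c2)).sub
      (hD1 u).hasDerivAt
    refine h.congr_deriv ?_
    rw [hF'app]
    ring
  have hF'd : ∀ u, HasDerivAt F' (-(k * (F u + D u)) - deriv (deriv D) u) u := by
    intro u
    have h := ((((hcsub u).const_mul c1).neg).add ((hasDerivAt_genCos k u).const_mul c2)).sub
      (hD2 u).hasDerivAt
    refine h.congr_deriv ?_
    rw [hFapp]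
    ring
  have hWd : ∀ u, HasDerivAt W (-(genSin k u * (deriv (deriv D) u + k * D u))) u := by
    intro u
    have h := ((hasDerivAt_genSin k u).mul (hF'd u)).sub ((hasDerivAt_genCos k u).mul (hFd u))
    refine h.congr_deriv ?_
    rw [hFapp, hF'app]
    ring
  have hWdiff : Differentiable ℝ W := fun u => (hWd u).differentiableAt
  have hanti : AntitoneOn W (Set.Icc 0 1) := by
    apply antitoneOn_of_deriv_nonpos (convex_Icc 0 1) hWdiff.continuous.continuousOn
      hWdiff.differentiableOn
    intro x hx
    rw [interior_Icc] at hx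
    rw [(hWd x).deriv]
    have hsx : 0 < genSin k x := genSin_pos_s8 hkπ hx.1 hx.2.le
    have h := hineq x ⟨hx.1.le, hx.2.le⟩
    nlinarith
  have hF0 : F 0 = 0 := by
    rw [hFapp, show (1:ℝ) - 0 = 1 by norm_num, genSin_zero, hc1]
    field_simp
    ring
  have hF1 : F 1 = 0 := by
    rw [hFapp, show (1:ℝ) - 1 = 0 by norm_num, genSin_zero, hc2]
    field_simp
    ring
  have hW0 : W 0 = 0 := by
    rw [hWapp, genSin_zero, hF0]
    ring
  have hWle : ∀ u ∈ Set.Icc (0 : ℝ) 1, W u ≤ 0 := by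
    intro u hu
    have := hanti (Set.left_mem_Icc.mpr zero_le_one) hu hu.1
    rwa [hW0] at this
  have hFnn : 0 ≤ F t := by
    rcases eq_or_lt_of_le ht.1 with h0 | ht0
    · rw [← h0, hF0]
    · set g : ℝ → ℝ := fun u => F u / genSin k u with hgdef
      have hgd : ∀ u ∈ Set.Icc t 1, HasDerivAt g (W u / genSin k u ^ 2) u := by
        intro u hu
        have hsu : 0 < genSin k u := genSin_pos_s8 hkπ (lt_of_lt_of_le ht0 hu.1) hu.2
        have h := (hFd u).div (hasDerivAt_genSin k u) hsu.ne'
        refine h.congr_deriv ?_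
        rw [hWapp]
        ring
      have hganti : AntitoneOn g (Set.Icc t 1) := by
        apply antitoneOn_of_deriv_nonpos (convex_Icc t 1)
        · intro u hu
          exact (hgd u hu).continuousAt.continuousWithinAt
        · intro u hu
          rw [interior_Icc] at hu
          exact ((hgd u ⟨hu.1.le, hu.2.le⟩).differentiableAt).differentiableWithinAt
        · intro u hu
          rw [interior_Icc] at hu
          rw [(hgd u ⟨hu.1.le, hu.2.le⟩).deriv]
          have hsu : 0 < genSin k u := genSin_pos_s8 hkπ (lt_of_lt_of_le ht0 hu.1.le) hu.2.le
          exact div_nonpos_of_nonpos_of_nonneg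
            (hWle u ⟨le_trans ht.1 hu.1.le, hu.2.le⟩) (sq_nonneg _)
      have hg1 : g 1 ≤ g t := by
        exact hganti (Set.left_mem_Icc.mpr ht.2) (Set.right_mem_Icc.mpr ht.2) ht.2
      have hst : 0 < genSin k t := genSin_pos_s8 hkπ ht0 ht.2
      have hg1v : g 1 = 0 := by
        show F 1 / genSin k 1 = 0
        rw [hF1, zero_div]
      rw [hg1v] at hg1
      have : 0 ≤ F t / genSin k t := hg1
      have h := mul_nonneg this hst.le
      rwa [div_mul_cancel₀ _ hst.ne'] at h
  have heq : genSin k (1 - t) / genSin k 1 * D 0 + genSin k t / genSin k 1 * D 1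
      = F t + D t := by
    rw [hFapp, hc1, hc2]
    ring
  rw [heq]
  linarith
end

section
/- Let R be a fixed symmetric n×n real matrix and for λ ≥ 0 let M_λ : [0,1] → ℝ^{n×n} ⊕ ℝ^{n×n} solve the matrix boundary value problem M̈_λ(t) = λ² R(t) M_λ(t) (where R(t) depends smoothly on λt with R(0) = R), M_λ(0) = π₁, M_λ(1) = π₂ (projections onto the two factors). Then, as λ → 0, M_λ(t)(u,v) = (1−t)u + tv − λ²·(t(1−t)/6)·R((2−t)u + (1+t)v) + O(λ³), uniformly in t ∈ [0,1] and for (u,v) in bounded sets. -/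
open scoped RealInnerProductSpace

open Set ContinuousLinearMap
open scoped ContDiff

lemma maxprin {F : Type*} [NormedAddCommGroup F] [NormedSpace ℝ F]
    (f : ℝ → F) (K : ℝ)
    (hd : Differentiable ℝ f) (hd2 : Differentiable ℝ (deriv f))
    (hK : ∀ t ∈ Set.Icc (0:ℝ) 1, ‖deriv (deriv f) t‖ ≤ K)
    (h0 : f 0 = 0) (h1 : f 1 = 0) :
    ∀ t ∈ Set.Icc (0:ℝ) 1, ‖f t‖ ≤ K / 2 := by
  intro t₀ ht₀
  obtain ⟨φ, hφ1, hφx⟩ := exists_dual_vector'' ℝ (f t₀)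
  have hK0 : 0 ≤ K := le_trans (norm_nonneg _) (hK t₀ ht₀)
  set g : ℝ → ℝ := fun t => φ (f t) + K * (t^2 - t) / 2 with hg
  -- derivatives of g
  have hg1 : ∀ t, HasDerivAt g (φ (deriv f t) + K * (2*t - 1) / 2) t := by
    intro t
    have h1 : HasDerivAt (fun t => φ (f t)) (φ (deriv f t)) t :=
      φ.hasFDerivAt.comp_hasDerivAt t (hd t).hasDerivAt
    have h2 : HasDerivAt (fun t : ℝ => K * (t^2 - t) / 2) (K * (2*t - 1) / 2) t := by
      have := (((hasDerivAt_pow 2 t).sub (hasDerivAt_id t)).const_mul K).div_const 2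
      exact this.congr_deriv (by ring)
    exact h1.add h2
  have hgd : deriv g = fun t => φ (deriv f t) + K * (2*t - 1) / 2 :=
    funext fun t => (hg1 t).deriv
  have hg2 : ∀ t, HasDerivAt (deriv g) (φ (deriv (deriv f) t) + K) t := by
    intro t
    rw [hgd]
    have h1 : HasDerivAt (fun t => φ (deriv f t)) (φ (deriv (deriv f) t)) t :=
      φ.hasFDerivAt.comp_hasDerivAt t (hd2 t).hasDerivAt
    have h2 : HasDerivAt (fun t : ℝ => K * (2*t - 1) / 2) K t := by
      have := (((hasDerivAt_id t).const_mul 2).sub_const 1).const_mul K |>.div_const 2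
      exact this.congr_deriv (by ring)
    exact h1.add h2
  have hconv : ConvexOn ℝ (Icc (0:ℝ) 1) g := by
    refine convexOn_of_deriv2_nonneg (convex_Icc 0 1)
      (Differentiable.continuous (fun t => (hg1 t).differentiableAt)).continuousOn
      (fun t _ => ((hg1 t).differentiableAt).differentiableWithinAt)
      (fun t _ => ((hg2 t).differentiableAt).differentiableWithinAt) ?_
    intro x hx
    have hx' : x ∈ Icc (0:ℝ) 1 := interior_subset hx
    have h2 : deriv^[2] g x = φ (deriv (deriv f) x) + K := by
      simp only [Function.iterate_succ, Function.iterate_zero, Function.comp_apply, _root_.id]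
      exact (hg2 x).deriv
    rw [h2]
    have : |φ (deriv (deriv f) x)| ≤ K := by
      calc |φ (deriv (deriv f) x)| ≤ ‖φ‖ * ‖deriv (deriv f) x‖ := φ.le_opNorm _
        _ ≤ 1 * K := by
            apply mul_le_mul hφ1 (hK x hx') (norm_nonneg _) zero_le_one
        _ = K := one_mul K
    linarith [abs_le.1 this |>.1]
  have hg0 : g 0 = 0 := by simp [hg, h0]
  have hg1' : g 1 = 0 := by simp [hg, h1]
  have hcc := hconv.2 (left_mem_Icc.2 zero_le_one) (right_mem_Icc.2 zero_le_one)
    (show (0:ℝ) ≤ 1 - t₀ by linarith [ht₀.2]) ht₀.1 (by ring)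
  rw [hg0, hg1'] at hcc
  simp only [smul_eq_mul, mul_zero, mul_one, add_zero, zero_add] at hcc
  have hgt : g t₀ ≤ 0 := by simpa using hcc
  have : φ (f t₀) ≤ K * (t₀ - t₀^2) / 2 := by
    simp only [hg] at hgt; linarith
  have hφx2 : φ (f t₀) = ‖f t₀‖ := by exact_mod_cast hφx
  have hle : ‖f t₀‖ ≤ K * (t₀ - t₀^2) / 2 := by rw [← hφx2]; exact this
  nlinarith [ht₀.1, ht₀.2, sq_nonneg t₀]

set_option maxHeartbeats 1000000 in
set_option synthInstance.maxHeartbeats 400000 in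
/-- Second-order perturbative expansion of solutions of the boundary-value Jacobi
equation `M̈_λ(t) = λ² R(λt) M_λ(t)`, `M_λ(0) = π₁`, `M_λ(1) = π₂`, as `λ → 0`:
`M_λ(t)(u,v) = (1−t)u + tv − λ²(t(1−t)/6) R₀((2−t)u + (1+t)v) + O(λ³)`,
uniformly in `t ∈ [0,1]` and `(u,v)` in bounded sets. -/
theorem jacobi_bvp_expansion (n : ℕ)
    (R : ℝ → (EuclideanSpace ℝ (Fin n) →L[ℝ] EuclideanSpace ℝ (Fin n)))
    (hR : ContDiff ℝ (⊤ : ℕ∞) R)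
    (hRsymm : ∀ u v : EuclideanSpace ℝ (Fin n), ⟪R 0 u, v⟫ = ⟪u, R 0 v⟫)
    (M : ℝ → ℝ →
      (EuclideanSpace ℝ (Fin n) × EuclideanSpace ℝ (Fin n) →L[ℝ]
        EuclideanSpace ℝ (Fin n)))
    (hM : ContDiff ℝ (⊤ : ℕ∞) (fun p : ℝ × ℝ => M p.1 p.2))
    (hODE : ∀ lam t : ℝ, deriv (deriv (M lam)) t
        = (lam ^ 2) • ((R (lam * t)).comp (M lam t)))
    (hbdry0 : ∀ lam : ℝ, M lam 0 = ContinuousLinearMap.fst ℝ _ _)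
    (hbdry1 : ∀ lam : ℝ, M lam 1 = ContinuousLinearMap.snd ℝ _ _) :
    ∀ B > (0 : ℝ), ∃ C > (0 : ℝ), ∃ lam₀ > (0 : ℝ),
      ∀ lam : ℝ, 0 < lam → lam < lam₀ →
        ∀ t ∈ Set.Icc (0 : ℝ) 1,
          ∀ u v : EuclideanSpace ℝ (Fin n), ‖u‖ ≤ B → ‖v‖ ≤ B →
            ‖M lam t (u, v) -
                ((1 - t) • u + t • v -
                  (lam ^ 2 * (t * (1 - t) / 6)) • R 0 ((2 - t) • u + (1 + t) • v))‖
              ≤ C * lam ^ 3 := by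
  set pfst : (EuclideanSpace ℝ (Fin n) × EuclideanSpace ℝ (Fin n) →L[ℝ] EuclideanSpace ℝ (Fin n)) := ContinuousLinearMap.fst ℝ (EuclideanSpace ℝ (Fin n)) (EuclideanSpace ℝ (Fin n)) with hpfst
  set psnd : (EuclideanSpace ℝ (Fin n) × EuclideanSpace ℝ (Fin n) →L[ℝ] EuclideanSpace ℝ (Fin n)) := ContinuousLinearMap.snd ℝ (EuclideanSpace ℝ (Fin n)) (EuclideanSpace ℝ (Fin n)) with hpsnd
  set A : ℝ → ((EuclideanSpace ℝ (Fin n) × EuclideanSpace ℝ (Fin n) →L[ℝ] EuclideanSpace ℝ (Fin n))) := fun t => (1 - t) • pfst + t • psnd with hA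
  set C₁ : (EuclideanSpace ℝ (Fin n) × EuclideanSpace ℝ (Fin n) →L[ℝ] EuclideanSpace ℝ (Fin n)) := (R 0).comp pfst with hC₁
  set C₂ : (EuclideanSpace ℝ (Fin n) × EuclideanSpace ℝ (Fin n) →L[ℝ] EuclideanSpace ℝ (Fin n)) := (R 0).comp psnd with hC₂
  set q₁ : ℝ → ℝ := fun t => t^2/2 - t^3/6 - t/3 with hq₁
  set q₂ : ℝ → ℝ := fun t => t^3/6 - t/6 with hq₂
  -- smoothness in t for fixed lam
  have hm : ∀ lam : ℝ, ContDiff ℝ ∞ (M lam) := fun lam =>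
    (hM.of_le (by simp)).comp (contDiff_const.prodMk contDiff_id)
  have hm1 : ∀ lam : ℝ, Differentiable ℝ (M lam) := fun lam =>
    (hm lam).differentiable (by simp)
  have hm2 : ∀ lam : ℝ, Differentiable ℝ (deriv (M lam)) := fun lam =>
    ((contDiff_infty_iff_deriv.mp (hm lam)).2).differentiable (by simp)
  -- derivative facts for A
  have hAd : ∀ t : ℝ, HasDerivAt A ((-1 : ℝ) • pfst + (1 : ℝ) • psnd) t := by
    intro t
    exact (((hasDerivAt_id t).const_sub 1).smul_const pfst).add
      ((hasDerivAt_id t).smul_const psnd)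
  -- derivative facts for q₁, q₂
  have hq1d : ∀ t : ℝ, HasDerivAt q₁ (t - t^2/2 - 1/3) t := by
    intro t
    have := (((hasDerivAt_pow 2 t).div_const 2).sub ((hasDerivAt_pow 3 t).div_const 6)).sub
      ((hasDerivAt_id t).div_const 3)
    exact this.congr_deriv (by ring)
  have hq2d : ∀ t : ℝ, HasDerivAt q₂ (t^2/2 - 1/6) t := by
    intro t
    have := ((hasDerivAt_pow 3 t).div_const 6).sub ((hasDerivAt_id t).div_const 6)
    exact this.congr_deriv (by ring)
  have hq1d2 : ∀ t : ℝ, HasDerivAt (fun t : ℝ => t - t^2/2 - 1/3) (1 - t) t := by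
    intro t
    have := (((hasDerivAt_id t).sub ((hasDerivAt_pow 2 t).div_const 2)).sub_const (1/3))
    exact this.congr_deriv (by ring)
  have hq2d2 : ∀ t : ℝ, HasDerivAt (fun t : ℝ => t^2/2 - 1/6) t t := by
    intro t
    have := ((hasDerivAt_pow 2 t).div_const 2).sub_const (1/6)
    exact this.congr_deriv (by ring)
  -- the error functions
  set D : ℝ → ℝ → ((EuclideanSpace ℝ (Fin n) × EuclideanSpace ℝ (Fin n) →L[ℝ] EuclideanSpace ℝ (Fin n))) := fun lam t => M lam t - A t with hD
  set E : ℝ → ℝ → ((EuclideanSpace ℝ (Fin n) × EuclideanSpace ℝ (Fin n) →L[ℝ] EuclideanSpace ℝ (Fin n))) := fun lam t =>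
    M lam t - A t - (lam^2 * q₁ t) • C₁ - (lam^2 * q₂ t) • C₂ with hE
  -- first derivatives
  set D1 : ℝ → ℝ → ((EuclideanSpace ℝ (Fin n) × EuclideanSpace ℝ (Fin n) →L[ℝ] EuclideanSpace ℝ (Fin n))) := fun lam t =>
    deriv (M lam) t - ((-1 : ℝ) • pfst + (1 : ℝ) • psnd) with hD1
  set E1 : ℝ → ℝ → ((EuclideanSpace ℝ (Fin n) × EuclideanSpace ℝ (Fin n) →L[ℝ] EuclideanSpace ℝ (Fin n))) := fun lam t =>
    deriv (M lam) t - ((-1 : ℝ) • pfst + (1 : ℝ) • psnd)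
      - (lam^2 * (t - t^2/2 - 1/3)) • C₁ - (lam^2 * (t^2/2 - 1/6)) • C₂ with hE1
  have hDd : ∀ lam t : ℝ, HasDerivAt (D lam) (D1 lam t) t := fun lam t =>
    ((hm1 lam t).hasDerivAt).sub (hAd t)
  have hEd : ∀ lam t : ℝ, HasDerivAt (E lam) (E1 lam t) t := fun lam t =>
    ((((hm1 lam t).hasDerivAt).sub (hAd t)).sub
      (((hq1d t).const_mul (lam^2)).smul_const C₁)).sub
      (((hq2d t).const_mul (lam^2)).smul_const C₂)
  have hDderiv : ∀ lam : ℝ, deriv (D lam) = D1 lam := fun lam =>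
    funext fun t => (hDd lam t).deriv
  have hEderiv : ∀ lam : ℝ, deriv (E lam) = E1 lam := fun lam =>
    funext fun t => (hEd lam t).deriv
  -- second derivatives
  have hMd2 : ∀ lam t : ℝ,
      HasDerivAt (deriv (M lam)) ((lam ^ 2) • ((R (lam * t)).comp (M lam t))) t := by
    intro lam t
    have := (hm2 lam t).hasDerivAt
    rwa [hODE lam t] at this
  have hD1d : ∀ lam t : ℝ,
      HasDerivAt (D1 lam) ((lam ^ 2) • ((R (lam * t)).comp (M lam t))) t := by
    intro lam t
    exact (hMd2 lam t).sub_const ((-1 : ℝ) • pfst + (1 : ℝ) • psnd)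
  have hE1d : ∀ lam t : ℝ,
      HasDerivAt (E1 lam)
        ((lam ^ 2) • ((R (lam * t)).comp (M lam t))
          - (lam^2 * (1 - t)) • C₁ - (lam^2 * t) • C₂) t := by
    intro lam t
    exact (((hMd2 lam t).sub_const ((-1 : ℝ) • pfst + (1 : ℝ) • psnd)).sub
      (((hq1d2 t).const_mul (lam^2)).smul_const C₁)).sub
      (((hq2d2 t).const_mul (lam^2)).smul_const C₂)
  have hDderiv2 : ∀ lam t : ℝ,
      deriv (deriv (D lam)) t = (lam ^ 2) • ((R (lam * t)).comp (M lam t)) := by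
    intro lam t; rw [hDderiv lam]; exact (hD1d lam t).deriv
  have hEderiv2 : ∀ lam t : ℝ,
      deriv (deriv (E lam)) t = (lam ^ 2) • ((R (lam * t)).comp (M lam t))
          - (lam^2 * (1 - t)) • C₁ - (lam^2 * t) • C₂ := by
    intro lam t; rw [hEderiv lam]; exact (hE1d lam t).deriv
  -- rewrite E'' as lam² • (R(lam t) ∘ M - R 0 ∘ A)
  have hcomb : ∀ t : ℝ, (1 - t) • C₁ + t • C₂ = (R 0).comp (A t) := by
    intro t
    rw [hA, hC₁, hC₂]
    simp only [ContinuousLinearMap.comp_add, ContinuousLinearMap.comp_smul]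
  have hEderiv2' : ∀ lam t : ℝ,
      deriv (deriv (E lam)) t
        = (lam ^ 2) • ((R (lam * t)).comp (M lam t) - (R 0).comp (A t)) := by
    intro lam t
    rw [hEderiv2 lam t, smul_sub, ← hcomb t, smul_add, smul_smul, smul_smul,
      sub_add_eq_sub_sub]
  -- boundary values
  have hq10 : q₁ 0 = 0 := by simp [hq₁]
  have hq20 : q₂ 0 = 0 := by simp [hq₂]
  have hq11 : q₁ 1 = 0 := by norm_num [hq₁]
  have hq21 : q₂ 1 = 0 := by norm_num [hq₂]
  have hA0 : A 0 = pfst := by ext x <;> simp [hA]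
  have hA1 : A 1 = psnd := by ext x <;> simp [hA]
  have hD0 : ∀ lam : ℝ, D lam 0 = 0 := by
    intro lam; ext x <;> simp [hD, hA0, hbdry0 lam, hpfst]
  have hD1' : ∀ lam : ℝ, D lam 1 = 0 := by
    intro lam; ext x <;> simp [hD, hA1, hbdry1 lam, hpsnd]
  have hE0 : ∀ lam : ℝ, E lam 0 = 0 := by
    intro lam; ext x <;> simp [hE, hA0, hbdry0 lam, hq10, hq20, hpfst]
  have hE1' : ∀ lam : ℝ, E lam 1 = 0 := by
    intro lam; ext x <;> simp [hE, hA1, hbdry1 lam, hq11, hq21, hpsnd]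
  -- bounds
  obtain ⟨KM, hKM⟩ := (isCompact_Icc.prod isCompact_Icc).exists_bound_of_continuousOn
    (s := (Icc (0:ℝ) 1) ×ˢ (Icc (0:ℝ) 1)) hM.continuous.continuousOn
  obtain ⟨KR, hKR⟩ := isCompact_Icc.exists_bound_of_continuousOn
    (s := Icc (0:ℝ) 1) hR.continuous.continuousOn
  obtain ⟨L, hL⟩ := isCompact_Icc.exists_bound_of_continuousOn
    (s := Icc (0:ℝ) 1) ((contDiff_infty_iff_deriv.mp (hR.of_le (by simp))).2).continuous.continuousOn
  have hKM0 : 0 ≤ KM := le_trans (norm_nonneg _)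
    (hKM (0, 0) (by constructor <;> exact ⟨le_refl 0, zero_le_one⟩))
  have hKR0 : 0 ≤ KR := le_trans (norm_nonneg _) (hKR 0 ⟨le_refl 0, zero_le_one⟩)
  have hL0 : 0 ≤ L := le_trans (norm_nonneg _) (hL 0 ⟨le_refl 0, zero_le_one⟩)
  -- Lipschitz bound for R on [0,1]
  have hRlip : ∀ s ∈ Icc (0:ℝ) 1, ‖R s - R 0‖ ≤ L * s := by
    intro s hs
    have := norm_image_sub_le_of_norm_deriv_le_segment' (a := 0) (b := 1)
      (f := R) (f' := deriv R)
      (fun x _ => (((hR.of_le ((by simp) : (∞ : WithTop ℕ∞) ≤ ∞)).differentiable (by simp)) x).hasDerivAt.hasDerivWithinAt)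
      (fun x hx => hL x (Ico_subset_Icc_self hx)) s hs
    simpa using this
  intro B hB
  refine ⟨(L * KM + KR^2 * KM / 2) / 2 * B + 1, by positivity, 1, one_pos, ?_⟩
  intro lam hlam hlam1 t ht u v hu hv
  have hlamIcc : ∀ s ∈ Icc (0:ℝ) 1, lam * s ∈ Icc (0:ℝ) 1 := by
    intro s hs
    constructor
    · exact mul_nonneg hlam.le hs.1
    · calc lam * s ≤ 1 * 1 :=
          mul_le_mul hlam1.le hs.2 hs.1 zero_le_one
        _ = 1 := one_mul 1
  have hMbd : ∀ s ∈ Icc (0:ℝ) 1, ‖M lam s‖ ≤ KM := by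
    intro s hs
    exact hKM (lam, s) ⟨⟨hlam.le, hlam1.le⟩, hs⟩
  -- Step 1 : crude bound on D
  have hDbd : ∀ s ∈ Icc (0:ℝ) 1, ‖D lam s‖ ≤ lam^2 * (KR * KM) / 2 := by
    refine maxprin (D lam) (lam^2 * (KR * KM))
      (fun s => (hDd lam s).differentiableAt)
      (by rw [hDderiv lam]; exact fun s => (hD1d lam s).differentiableAt)
      ?_ (hD0 lam) (hD1' lam)
    intro s hs
    rw [hDderiv2 lam s]
    refine le_trans (ContinuousLinearMap.opNorm_smul_le _ _) ?_
    have h1 : ‖(R (lam * s)).comp (M lam s)‖ ≤ KR * KM :=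
      le_trans (opNorm_comp_le _ _)
        (mul_le_mul (hKR _ (hlamIcc s hs)) (hMbd s hs) (norm_nonneg _) hKR0)
    rw [Real.norm_eq_abs, abs_of_nonneg (show (0:ℝ) ≤ lam^2 by positivity)]
    exact mul_le_mul_of_nonneg_left h1 (by positivity)
  -- Step 2 : bound on E
  have hEbd : ∀ s ∈ Icc (0:ℝ) 1, ‖E lam s‖ ≤ lam^3 * (L * KM + KR^2 * KM / 2) / 2 := by
    refine maxprin (E lam) (lam^3 * (L * KM + KR^2 * KM / 2))
      (fun s => (hEd lam s).differentiableAt)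
      (by rw [hEderiv lam]; exact fun s => (hE1d lam s).differentiableAt)
      ?_ (hE0 lam) (hE1' lam)
    intro s hs
    rw [hEderiv2' lam s]
    refine le_trans (ContinuousLinearMap.opNorm_smul_le _ _) ?_
    have key : ‖(R (lam * s)).comp (M lam s) - (R 0).comp (A s)‖
        ≤ lam * (L * KM) + KR * (lam^2 * (KR * KM) / 2) := by
      have hsplit : (R (lam * s)).comp (M lam s) - (R 0).comp (A s)
          = (R (lam * s) - R 0).comp (M lam s) + (R 0).comp (M lam s - A s) := by
        refine ContinuousLinearMap.ext fun x => ?_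
        simp only [ContinuousLinearMap.sub_apply, ContinuousLinearMap.add_apply,
          ContinuousLinearMap.comp_apply, map_sub]
        abel
      rw [hsplit]
      have h1 : ‖(R (lam * s) - R 0).comp (M lam s)‖ ≤ (L * (lam * s)) * KM :=
        le_trans (opNorm_comp_le _ _)
          (mul_le_mul (hRlip _ (hlamIcc s hs)) (hMbd s hs) (norm_nonneg _)
            (mul_nonneg hL0 (mul_nonneg hlam.le hs.1)))
      have h2 : ‖(R 0).comp (M lam s - A s)‖ ≤ KR * (lam^2 * (KR * KM) / 2) :=
        le_trans (opNorm_comp_le _ _)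
          (mul_le_mul (hKR 0 ⟨le_refl 0, zero_le_one⟩) (hDbd s hs) (norm_nonneg _) hKR0)
      calc ‖(R (lam * s) - R 0).comp (M lam s) + (R 0).comp (M lam s - A s)‖
          ≤ ‖(R (lam * s) - R 0).comp (M lam s)‖ + ‖(R 0).comp (M lam s - A s)‖ :=
            norm_add_le _ _
        _ ≤ (L * (lam * s)) * KM + KR * (lam^2 * (KR * KM) / 2) := by
            refine add_le_add h1 h2
        _ ≤ lam * (L * KM) + KR * (lam^2 * (KR * KM) / 2) := by
            have h3 : L * (lam * s) * KM ≤ lam * (L * KM) := by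
              calc L * (lam * s) * KM = (L * KM * lam) * s := by ring
                _ ≤ (L * KM * lam) * 1 := mul_le_mul_of_nonneg_left hs.2
                    (mul_nonneg (mul_nonneg hL0 hKM0) hlam.le)
                _ = lam * (L * KM) := by ring
            linarith
    rw [Real.norm_eq_abs, abs_of_nonneg (show (0:ℝ) ≤ lam^2 by positivity)]
    have step : lam^2 * ‖(R (lam * s)).comp (M lam s) - (R 0).comp (A s)‖
        ≤ lam^2 * (lam * (L * KM) + KR * (lam^2 * (KR * KM) / 2)) :=
      mul_le_mul_of_nonneg_left key (by positivity)
    have e2 : lam^4 * (KR^2 * KM / 2) ≤ lam^3 * (KR^2 * KM / 2) :=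
      mul_le_mul_of_nonneg_right
        (pow_le_pow_of_le_one hlam.le hlam1.le (by norm_num))
        (div_nonneg (mul_nonneg (sq_nonneg KR) hKM0) (by norm_num))
    have hlam3 : lam^2 * (lam * (L * KM) + KR * (lam^2 * (KR * KM) / 2))
        ≤ lam^3 * (L * KM + KR^2 * KM / 2) := by
      have e1 : lam^2 * (lam * (L * KM) + KR * (lam^2 * (KR * KM) / 2))
          = lam^3 * (L * KM) + lam^4 * (KR^2 * KM / 2) := by ring
      have e3 : lam^3 * (L * KM) + lam^3 * (KR^2 * KM / 2)
          = lam^3 * (L * KM + KR^2 * KM / 2) := by ring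
      linarith
    linarith
  -- express the goal in terms of E
  have hgoal : M lam t (u, v) -
      ((1 - t) • u + t • v -
        (lam ^ 2 * (t * (1 - t) / 6)) • R 0 ((2 - t) • u + (1 + t) • v))
      = E lam t (u, v) := by
    simp only [hE, hA, hC₁, hC₂, ContinuousLinearMap.sub_apply,
      ContinuousLinearMap.add_apply, ContinuousLinearMap.smul_apply,
      ContinuousLinearMap.comp_apply, ContinuousLinearMap.coe_fst',
      ContinuousLinearMap.coe_snd', hpfst, hpsnd, hq₁, hq₂]
    rw [map_add, map_smul, map_smul]
    match_scalars <;> ring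
  rw [hgoal]
  have hnorm_uv : ‖((u, v) : EuclideanSpace ℝ (Fin n) × EuclideanSpace ℝ (Fin n))‖ ≤ B := by
    rw [Prod.norm_def]
    exact max_le hu hv
  calc ‖E lam t (u, v)‖ ≤ ‖E lam t‖ * ‖((u, v) : EuclideanSpace ℝ (Fin n) × EuclideanSpace ℝ (Fin n))‖ := (E lam t).le_opNorm _
    _ ≤ (lam^3 * (L * KM + KR^2 * KM / 2) / 2) * B := by
        refine mul_le_mul (hEbd t ht) hnorm_uv (norm_nonneg _) ?_
        positivity
    _ = ((L * KM + KR^2 * KM / 2) / 2 * B) * lam ^ 3 := by ring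
    _ ≤ ((L * KM + KR^2 * KM / 2) / 2 * B + 1) * lam ^ 3 := by
        refine mul_le_mul_of_nonneg_right (by linarith) (by positivity)
end
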